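/- arXiv:math-ph/0202029 — 4 statements merged into one kernel-verified Lean document; each statement's English description precedes it below -/
import Mathlib

section
/- Let T be a nonzero continuous rank-r covariant tensor on a Lorentzian vector space with the dominant property (T ≥ 0 on r-tuples of future-pointing causal vectors). Then T(u₁,…,u_r) > 0 strictly for all future-pointing timelike vectors u₁,…,u_r. -/
/-!
If `T` vanishes at a tuple `u` of timelike vectors, then for each slot `i` the linear form
`x ↦ T(u₁, …, x, …, u_r)` is nonnegative on the open timelike cone and vanishes at its interior
point `uᵢ`, so it has a local minimum there and is therefore zero. Replacing the slots one at a
time, `T` vanishes on all timelike tuples; since the open cone spans the whole space, `T = 0`.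
-/

open scoped BigOperators

noncomputable section

/-- Minkowski metric on `Fin n → ℝ`, mostly-plus signature (1, n-1). -/
def mink (n : ℕ) [NeZero n] (u v : Fin n → ℝ) : ℝ :=
  ∑ i : Fin n, (if i = 0 then (-1 : ℝ) else 1) * u i * v i

/-- Future-pointing causal vector: nonpositive norm, in the closed future half-cone. -/
def FutureCausal (n : ℕ) [NeZero n] (u : Fin n → ℝ) : Prop :=
  mink n u u ≤ 0 ∧ 0 ≤ u 0

/-- The dominant property for rank-`r` covariant tensors. -/
def DP (n r : ℕ) [NeZero n] (T : MultilinearMap ℝ (fun _ : Fin r => (Fin n → ℝ)) ℝ) : Prop :=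
  ∀ u : Fin r → (Fin n → ℝ), (∀ i, FutureCausal n (u i)) → 0 ≤ T u

/-- Future-pointing timelike vector. -/
def FutureTimelike (n : ℕ) [NeZero n] (u : Fin n → ℝ) : Prop :=
  mink n u u < 0 ∧ 0 < u 0

theorem LinearMap.eq_zero_of_isLocalMin {E : Type*} [AddCommGroup E] [Module ℝ E]
    [TopologicalSpace E] [ContinuousAdd E] [ContinuousSMul ℝ E]
    {f : E →ₗ[ℝ] ℝ} {u : E} (h : IsLocalMin f u) : f = 0 := by
  ext w
  have hline : IsLocalMin (fun t : ℝ => f (u + t • w)) 0 :=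
    IsLocalMin.comp_continuous (g := fun t : ℝ => u + t • w) (by simpa using h) (by fun_prop)
  have hderiv : HasDerivAt (fun t : ℝ => f (u + t • w)) (f w) 0 := by
    simp only [map_add, map_smul, smul_eq_mul]
    simpa using ((hasDerivAt_id (0 : ℝ)).mul_const (f w)).const_add (f u)
  exact hline.hasDerivAt_eq_zero hderiv

namespace MultilinearMap

variable {ι : Type*} [Fintype ι]

theorem eq_zero_of_forall_mem_of_span_eq_top {R M N : Type*} [CommSemiring R]
    [AddCommMonoid M] [Module R M] [AddCommMonoid N] [Module R N]
    {f : MultilinearMap R (fun _ : ι => M) N} {C : Set M} (hC : Submodule.span R C = ⊤)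
    (h : ∀ v : ι → M, (∀ i, v i ∈ C) → f v = 0) : f = 0 := by
  classical
  suffices ∀ s : Finset ι, ∀ v : ι → M, (∀ i ∉ s, v i ∈ C) → f v = 0 from
    ext fun v => this Finset.univ v (by simp)
  intro s
  induction s using Finset.induction_on with
  | empty => exact fun v hv => h v fun i => hv i (Finset.notMem_empty i)
  | insert i s _ ih =>
    intro v hv
    have hslice : f.toLinearMap v i = 0 := by
      refine LinearMap.ext_on hC fun x hx => ih _ fun j hj => ?_
      rcases eq_or_ne j i with rfl | hji
      · simpa using hx
      · simpa [hji] using hv j (by simp [hji, hj])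
    simpa using LinearMap.congr_fun hslice (v i)

variable {E : Type*} [AddCommGroup E] [Module ℝ E] [TopologicalSpace E] [ContinuousAdd E]
  [ContinuousSMul ℝ E] {f : MultilinearMap ℝ (fun _ : ι => E) ℝ} {C : Set E}

theorem eq_zero_on_of_nonneg_of_eq_zero (hC : IsOpen C)
    (hf : ∀ v : ι → E, (∀ i, v i ∈ C) → 0 ≤ f v) {u : ι → E} (hu : ∀ i, u i ∈ C)
    (hfu : f u = 0) (v : ι → E) (hv : ∀ i, v i ∈ C) : f v = 0 := by
  classical
  suffices ∀ s : Finset ι, ∀ v : ι → E, (∀ i, v i ∈ C) → (∀ i ∉ s, v i = u i) → f v = 0 from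
    this Finset.univ v hv (by simp)
  intro s
  induction s using Finset.induction_on with
  | empty => exact fun v _ hvu => funext (fun i => hvu i (Finset.notMem_empty i)) ▸ hfu
  | insert i s _ ih =>
    intro v hv hvu
    have hslice_nonneg : ∀ x ∈ C, 0 ≤ f.toLinearMap v i x := fun x hx =>
      hf _ (Function.forall_update_iff _ (p := fun _ y => y ∈ C) |>.2 ⟨hx, fun j _ => hv j⟩)
    have hslice_zero : f.toLinearMap v i (u i) = 0 := by
      refine ih _ (Function.forall_update_iff _ (p := fun _ y => y ∈ C) |>.2
        ⟨hu i, fun j _ => hv j⟩) fun j hj => ?_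
      rcases eq_or_ne j i with rfl | hji
      · simp
      · simpa [hji] using hvu j (by simp [hji, hj])
    have hmin : IsLocalMin (f.toLinearMap v i) (u i) :=
      Filter.eventually_of_mem (hC.mem_nhds (hu i)) fun x hx => hslice_zero ▸ hslice_nonneg x hx
    simpa using LinearMap.congr_fun (LinearMap.eq_zero_of_isLocalMin hmin) (v i)

theorem eq_zero_of_nonneg_of_eq_zero (hC : IsOpen C)
    (hf : ∀ v : ι → E, (∀ i, v i ∈ C) → 0 ≤ f v) {u : ι → E} (hu : ∀ i, u i ∈ C)
    (hfu : f u = 0) : f = 0 := by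
  rcases isEmpty_or_nonempty ι with _ | ⟨⟨i⟩⟩
  · exact ext fun v => Subsingleton.elim v u ▸ hfu
  · refine eq_zero_of_forall_mem_of_span_eq_top ?_ (eq_zero_on_of_nonneg_of_eq_zero hC hf hu hfu)
    refine Submodule.eq_top_of_nonempty_interior' _ ⟨u i, ?_⟩
    exact interior_mono Submodule.subset_span (hC.interior_eq.symm ▸ hu i)

end MultilinearMap

section Minkowski

variable {n : ℕ} [NeZero n]

theorem continuous_mink_self : Continuous fun u : Fin n → ℝ => mink n u u := by
  unfold mink
  fun_prop

theorem isOpen_setOf_futureTimelike : IsOpen {u : Fin n → ℝ | FutureTimelike n u} :=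
  (isOpen_lt continuous_mink_self continuous_const).inter
    (isOpen_lt continuous_const (continuous_apply 0))

theorem FutureTimelike.futureCausal {u : Fin n → ℝ} (h : FutureTimelike n u) :
    FutureCausal n u :=
  ⟨h.1.le, h.2.le⟩

end Minkowski

/-- A nonzero tensor with the dominant property is strictly positive on all
tuples of future-pointing timelike vectors. -/
theorem stmt_3 (n r : ℕ) [NeZero n]
    (T : MultilinearMap ℝ (fun _ : Fin r => (Fin n → ℝ)) ℝ)
    (hT : T ≠ 0) (hDP : DP n r T) :
    ∀ u : Fin r → (Fin n → ℝ), (∀ i, FutureTimelike n (u i)) → 0 < T u := by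
  intro u hu
  have hnonneg : ∀ v : Fin r → (Fin n → ℝ), (∀ i, FutureTimelike n (v i)) → 0 ≤ T v :=
    fun v hv => hDP v fun i => (hv i).futureCausal
  refine (hnonneg u hu).lt_of_ne fun hTu => hT ?_
  exact T.eq_zero_of_nonneg_of_eq_zero isOpen_setOf_futureTimelike hnonneg hu hTu.symm
end
end

section
/- If T is a covariant tensor on a Lorentzian vector space that factors as a tensor product T = k₁ ⊗ ⋯ ⊗ k_r of null covectors (each k_i satisfies g⁻¹(k_i,k_i) = 0), then either T or -T has the dominant property; that is, T is a causal tensor. -/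
/-!
A covector `k` with `g⁻¹(k, k) ≤ 0` (in particular a null one) has components `a_j = k(e_j)` with
`∑_{j ≠ 0} a_j² ≤ a₀²`. For a future causal `u`, `k u = u₀ a₀ + ∑_{j ≠ 0} u_j a_j`, and Cauchy–Schwarz
bounds the spatial sum by `u₀ |a₀|`, so `k` has the sign of `a₀` on the whole future causal cone.
A product of factors of fixed signs then has a fixed sign.
-/

open scoped BigOperators

noncomputable section

/-- Inverse Minkowski metric acting on covectors (components in the standard basis). -/
def minkInv (n : ℕ) [NeZero n] (k l : (Fin n → ℝ) →ₗ[ℝ] ℝ) : ℝ :=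
  ∑ i : Fin n, (if i = 0 then (-1 : ℝ) else 1) * k (Pi.single i 1) * l (Pi.single i 1)

open Finset

lemma LinearMap.apply_eq_sum_mul_single {R ι : Type*} [CommSemiring R] [Fintype ι] [DecidableEq ι]
    (k : (ι → R) →ₗ[R] R) (u : ι → R) : k u = ∑ j, u j * k (Pi.single j 1) := by
  conv_lhs => rw [← univ_sum_single u]
  rw [map_sum]
  refine sum_congr rfl fun j _ => ?_
  rw [← smul_eq_mul, ← map_smul, ← Pi.single_smul', smul_eq_mul, mul_one]

lemma add_sum_mul_nonneg_of_sum_sq_le {ι : Type*} (s : Finset ι) {x y : ι → ℝ} {x₀ y₀ : ℝ}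
    (hx : ∑ j ∈ s, x j ^ 2 ≤ x₀ ^ 2) (hy : ∑ j ∈ s, y j ^ 2 ≤ y₀ ^ 2)
    (hx₀ : 0 ≤ x₀) (hy₀ : 0 ≤ y₀) : 0 ≤ x₀ * y₀ + ∑ j ∈ s, x j * y j := by
  have hsq : (∑ j ∈ s, x j * y j) ^ 2 ≤ (x₀ * y₀) ^ 2 :=
    calc (∑ j ∈ s, x j * y j) ^ 2 ≤ (∑ j ∈ s, x j ^ 2) * ∑ j ∈ s, y j ^ 2 :=
          sum_mul_sq_le_sq_mul_sq s x y
      _ ≤ x₀ ^ 2 * y₀ ^ 2 := mul_le_mul hx hy (sum_nonneg fun j _ => sq_nonneg (y j)) (sq_nonneg x₀)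
      _ = (x₀ * y₀) ^ 2 := (mul_pow x₀ y₀ 2).symm
  linarith [(abs_le_of_sq_le_sq' hsq (mul_nonneg hx₀ hy₀)).1]

section Minkowski

variable {n : ℕ} [NeZero n]

lemma mink_self_eq (u : Fin n → ℝ) :
    mink n u u = ∑ j ∈ univ.erase 0, u j ^ 2 - u 0 ^ 2 := by
  rw [mink, ← add_sum_erase _ _ (mem_univ 0),
    sum_congr rfl fun j hj => show _ = u j ^ 2 by rw [if_neg (ne_of_mem_erase hj)]; ring,
    if_pos rfl]
  ring

lemma dotProduct_eq_add_sum_erase (u v : Fin n → ℝ) :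
    u ⬝ᵥ v = u 0 * v 0 + ∑ j ∈ univ.erase 0, u j * v j :=
  (add_sum_erase _ _ (mem_univ 0)).symm

lemma FutureCausal.dotProduct_nonneg {u v : Fin n → ℝ} (hu : FutureCausal n u)
    (hv : FutureCausal n v) : 0 ≤ u ⬝ᵥ v := by
  rw [dotProduct_eq_add_sum_erase]
  refine add_sum_mul_nonneg_of_sum_sq_le _ ?_ ?_ hu.2 hv.2
  · linarith [hu.1, mink_self_eq u]
  · linarith [hv.1, mink_self_eq v]

lemma FutureCausal.apply_nonneg {k : (Fin n → ℝ) →ₗ[ℝ] ℝ} (hk : minkInv n k k ≤ 0)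
    (hk₀ : 0 ≤ k (Pi.single 0 1)) {u : Fin n → ℝ} (hu : FutureCausal n u) : 0 ≤ k u := by
  rw [k.apply_eq_sum_mul_single]
  -- `minkInv n k k` is by definition the Minkowski norm of the component vector of `k`
  exact hu.dotProduct_nonneg (v := fun j => k (Pi.single j 1)) ⟨hk, hk₀⟩

lemma apply_nonneg_or_apply_nonpos_of_minkInv_self_nonpos {k : (Fin n → ℝ) →ₗ[ℝ] ℝ}
    (hk : minkInv n k k ≤ 0) :
    (∀ u, FutureCausal n u → 0 ≤ k u) ∨ (∀ u, FutureCausal n u → k u ≤ 0) := by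
  rcases le_total 0 (k (Pi.single 0 1)) with hk₀ | hk₀
  · exact Or.inl fun u hu => hu.apply_nonneg hk hk₀
  · refine Or.inr fun u hu => ?_
    have := hu.apply_nonneg (k := -k) (by simpa [minkInv] using hk) (by simpa using hk₀)
    simpa using this

end Minkowski

lemma prod_nonneg_or_prod_nonpos {ι α : Type*} (s : Finset ι) (P : α → Prop) (f : ι → α → ℝ)
    (hf : ∀ i, (∀ x, P x → 0 ≤ f i x) ∨ (∀ x, P x → f i x ≤ 0)) :
    (∀ u : ι → α, (∀ i, P (u i)) → 0 ≤ ∏ i ∈ s, f i (u i)) ∨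
      (∀ u : ι → α, (∀ i, P (u i)) → ∏ i ∈ s, f i (u i) ≤ 0) := by
  classical
  induction s using Finset.induction_on with
  | empty => exact Or.inl fun u _ => by simp
  | insert a s ha ih =>
    simp only [prod_insert ha]
    rcases hf a with hfa | hfa <;> rcases ih with ih | ih
    · exact Or.inl fun u hu => mul_nonneg (hfa _ (hu a)) (ih u hu)
    · exact Or.inr fun u hu => mul_nonpos_of_nonneg_of_nonpos (hfa _ (hu a)) (ih u hu)
    · exact Or.inr fun u hu => mul_nonpos_of_nonpos_of_nonneg (hfa _ (hu a)) (ih u hu)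
    · exact Or.inl fun u hu => mul_nonneg_of_nonpos_of_nonpos (hfa _ (hu a)) (ih u hu)

/-- A tensor product `k₁ ⊗ ⋯ ⊗ k_r` of null covectors is a causal tensor:
either it or its negative has the dominant property. -/
theorem stmt_5 (n r : ℕ) [NeZero n]
    (k : Fin r → ((Fin n → ℝ) →ₗ[ℝ] ℝ))
    (hnull : ∀ i, minkInv n (k i) (k i) = 0) :
    (∀ u : Fin r → (Fin n → ℝ), (∀ i, FutureCausal n (u i)) →
        0 ≤ ∏ i : Fin r, k i (u i)) ∨
    (∀ u : Fin r → (Fin n → ℝ), (∀ i, FutureCausal n (u i)) →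
        (∏ i : Fin r, k i (u i)) ≤ 0) :=
  prod_nonneg_or_prod_nonpos univ (FutureCausal n) (fun i => k i) fun i =>
    apply_nonneg_or_apply_nonpos_of_minkInv_self_nonpos (hnull i).le
end
end

section
/- Let Ω be a nonzero p-form (antisymmetric p-linear form) on an n-dimensional Lorentzian vector space, with 1 ≤ p ≤ n-1. Define its superenergy tensor by T{Ω}(x,y) = (1/(p-1)!)[ g⁻¹(i_xΩ, i_yΩ) - (1/(2p)) g⁻¹(Ω,Ω) g(x,y) ], where i_x denotes interior contraction and g⁻¹(·,·) the induced inner product on forms. Then T{Ω} has the dominant property: T{Ω}(u,v) ≥ 0 for all future-pointing causal vectors u, v. -/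
open scoped BigOperators

noncomputable section

/-- Full metric contraction `g(i_xΩ, i_yΩ)` of the interior contractions of a
`(p+1)`-form over the remaining `p` indices (standard-basis components,
with the mostly-plus signs from index raising). -/
def seContr (n p : ℕ) [NeZero n]
    (Ω : (Fin n → ℝ) [⋀^Fin (p + 1)]→ₗ[ℝ] ℝ) (x y : Fin n → ℝ) : ℝ :=
  ∑ β : Fin p → Fin n,
    (∏ i, if β i = 0 then (-1 : ℝ) else 1) *
      Ω (Fin.cons x fun i => Pi.single (β i) 1) *
      Ω (Fin.cons y fun i => Pi.single (β i) 1)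

/-- Full metric contraction `g(Ω, Ω)` of a `(p+1)`-form with itself. -/
def seNorm (n p : ℕ) [NeZero n]
    (Ω : (Fin n → ℝ) [⋀^Fin (p + 1)]→ₗ[ℝ] ℝ) : ℝ :=
  ∑ α : Fin (p + 1) → Fin n,
    (∏ i, if α i = 0 then (-1 : ℝ) else 1) *
      Ω (fun i => Pi.single (α i) 1) * Ω (fun i => Pi.single (α i) 1)

/-- The superenergy tensor of a `(p+1)`-form
`T{Ω}(x,y) = (1/p!)[ g(i_xΩ, i_yΩ) - (1/(2(p+1))) g(Ω,Ω) g(x,y) ]`. -/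
def seT (n p : ℕ) [NeZero n]
    (Ω : (Fin n → ℝ) [⋀^Fin (p + 1)]→ₗ[ℝ] ℝ) (x y : Fin n → ℝ) : ℝ :=
  (1 / (Nat.factorial p : ℝ)) *
    (seContr n p Ω x y -
      (1 / (2 * ((p : ℝ) + 1))) * seNorm n p Ω * mink n x y)

set_option linter.unusedSectionVars false
set_option maxHeartbeats 1000000

namespace SEaux

/-- degree-`q` alternating forms on `Fin n → ℝ`. -/
abbrev Alt (n q : ℕ) := (Fin n → ℝ) [⋀^Fin q]→ₗ[ℝ] ℝ

/-- diagonal entries of the Minkowski metric. -/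
def Gd (n : ℕ) [NeZero n] (a : Fin n) : ℝ := if a = 0 then -1 else 1

/-- standard basis vectors. -/
def ee {n : ℕ} (a : Fin n) : Fin n → ℝ := Pi.single a 1

variable {n : ℕ} [NeZero n]

/-- full contraction of the components of two `q`-forms with `q` copies of a
"metric" `H`. -/
def bBH (H : Fin n → Fin n → ℝ) (q : ℕ) (Φ Φ' : Alt n q) : ℝ :=
  ∑ α : Fin q → Fin n, ∑ β : Fin q → Fin n,
    (∏ j, H (α j) (β j)) * Φ (fun j => ee (α j)) * Φ' (fun j => ee (β j))

/-- full contraction of the components of two `q`-forms with the Minkowski metric. -/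
def nN (q : ℕ) (Φ Φ' : Alt n q) : ℝ :=
  ∑ β : Fin q → Fin n,
    (∏ j, Gd n (β j)) * Φ (fun j => ee (β j)) * Φ' (fun j => ee (β j))

/-- the deformed (inverse) metric built from two null vectors. -/
def Hm (k l : Fin n → ℝ) (a b : Fin n) : ℝ :=
  (if a = b then Gd n a else 0) + k a * l b + l a * k b

lemma Gd_mul_self (a : Fin n) : Gd n a * Gd n a = 1 := by
  unfold Gd; split <;> norm_num

lemma curry_apply {q : ℕ} (Φ : Alt n (q + 1)) (x : Fin n → ℝ) (v : Fin q → (Fin n → ℝ)) :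
    Φ.curryLeft x v = Φ (Fin.cons x v) := rfl

lemma sum_smul_ee (c : Fin n → ℝ) : (∑ a, c a • ee a) = c := by
  funext b
  simp [ee, Finset.sum_apply, Pi.single_apply, mul_ite, Finset.sum_ite_eq]

lemma map_cons_sum {q : ℕ} (Φ : Alt n (q + 1)) (c : Fin n → ℝ) (v : Fin q → (Fin n → ℝ)) :
    ∑ a, c a * Φ (Fin.cons (ee a) v) = Φ (Fin.cons c v) := by
  have h1 : Fin.cons (α := fun _ => Fin n → ℝ) c v
      = Function.update (Fin.cons (α := fun _ => Fin n → ℝ) (0 : Fin n → ℝ) v) 0 c :=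
    by rw [Fin.update_cons_zero]
  rw [h1]
  conv_rhs => rw [← sum_smul_ee c]
  have h2 : Φ.toMultilinearMap (Function.update (Fin.cons (0 : Fin n → ℝ) v) 0 (∑ a, c a • ee a))
      = ∑ a, Φ.toMultilinearMap (Function.update (Fin.cons (0 : Fin n → ℝ) v) 0 (c a • ee a)) :=
    Φ.toMultilinearMap.map_update_sum Finset.univ 0 (fun a => c a • ee a) _
  have h3 : ∀ a : Fin n,
      Φ.toMultilinearMap (Function.update (Fin.cons (0 : Fin n → ℝ) v) 0 (c a • ee a))
      = c a * Φ (Fin.cons (ee a) v) := by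
    intro a
    rw [Φ.toMultilinearMap.map_update_smul]
    rw [Fin.update_cons_zero]
    simp [smul_eq_mul]
  calc ∑ a, c a * Φ (Fin.cons (ee a) v)
      = ∑ a, Φ.toMultilinearMap (Function.update (Fin.cons (0 : Fin n → ℝ) v) 0 (c a • ee a)) :=
        Finset.sum_congr rfl fun a _ => (h3 a).symm
    _ = Φ.toMultilinearMap (Function.update (Fin.cons (0 : Fin n → ℝ) v) 0 (∑ a, c a • ee a)) :=
        h2.symm
    _ = _ := rfl

lemma ee_cons {q : ℕ} (a : Fin n) (β : Fin q → Fin n) :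
    (fun j : Fin (q + 1) => ee (Fin.cons (α := fun _ => Fin n) a β j))
      = Fin.cons (ee a) (fun j => ee (β j)) := by
  funext j
  refine Fin.cases ?_ (fun i => ?_) j <;> simp

lemma sum_split {q : ℕ} (f : (Fin (q + 1) → Fin n) → ℝ) :
    ∑ α : Fin (q + 1) → Fin n, f α
      = ∑ a : Fin n, ∑ α' : Fin q → Fin n, f (Fin.cons a α') := by
  rw [← (Fin.consEquiv (fun _ : Fin (q + 1) => Fin n)).sum_comp f]
  rw [Fintype.sum_prod_type]
  rfl

lemma nN_succ {q : ℕ} (Φ Φ' : Alt n (q + 1)) :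
    nN (q + 1) Φ Φ'
      = ∑ a, Gd n a * nN q (Φ.curryLeft (ee a)) (Φ'.curryLeft (ee a)) := by
  unfold nN
  rw [sum_split]
  refine Finset.sum_congr rfl fun a _ => ?_
  rw [Finset.mul_sum]
  refine Finset.sum_congr rfl fun β _ => ?_
  rw [ee_cons, Fin.prod_univ_succ]
  simp only [Fin.cons_zero, Fin.cons_succ, curry_apply]
  ring

lemma bBH_succ {q : ℕ} (H : Fin n → Fin n → ℝ) (Φ Φ' : Alt n (q + 1)) :
    bBH H (q + 1) Φ Φ'
      = ∑ a, ∑ b, H a b * bBH H q (Φ.curryLeft (ee a)) (Φ'.curryLeft (ee b)) := by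
  unfold bBH
  rw [sum_split]
  refine Finset.sum_congr rfl fun a _ => ?_
  rw [Finset.sum_comm]
  rw [sum_split]
  refine Finset.sum_congr rfl fun b _ => ?_
  rw [Finset.sum_comm]
  rw [Finset.mul_sum]
  refine Finset.sum_congr rfl fun α' _ => ?_
  rw [Finset.mul_sum]
  refine Finset.sum_congr rfl fun β' _ => ?_
  rw [ee_cons, ee_cons, Fin.prod_univ_succ]
  simp only [Fin.cons_zero, Fin.cons_succ, curry_apply]
  ring

lemma bBH_curry_sum_left {q : ℕ} (H : Fin n → Fin n → ℝ) (Φ : Alt n (q + 1))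
    (Ψ' : Alt n q) (c : Fin n → ℝ) :
    ∑ a, c a * bBH H q (Φ.curryLeft (ee a)) Ψ' = bBH H q (Φ.curryLeft c) Ψ' := by
  unfold bBH
  simp only [Finset.mul_sum]
  rw [Finset.sum_comm]
  refine Finset.sum_congr rfl fun α _ => ?_
  rw [Finset.sum_comm]
  refine Finset.sum_congr rfl fun β _ => ?_
  simp only [curry_apply]
  rw [← map_cons_sum Φ c (fun j => ee (α j))]
  conv_rhs => rw [Finset.mul_sum, Finset.sum_mul]
  refine Finset.sum_congr rfl fun a _ => ?_
  ring

lemma bBH_curry_sum_right {q : ℕ} (H : Fin n → Fin n → ℝ) (Ψ : Alt n q)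
    (Φ' : Alt n (q + 1)) (c : Fin n → ℝ) :
    ∑ b, c b * bBH H q Ψ (Φ'.curryLeft (ee b)) = bBH H q Ψ (Φ'.curryLeft c) := by
  unfold bBH
  simp only [Finset.mul_sum]
  rw [Finset.sum_comm]
  refine Finset.sum_congr rfl fun α _ => ?_
  rw [Finset.sum_comm]
  refine Finset.sum_congr rfl fun β _ => ?_
  simp only [curry_apply]
  rw [← map_cons_sum Φ' c (fun j => ee (β j))]
  conv_rhs => rw [Finset.mul_sum]
  refine Finset.sum_congr rfl fun b _ => ?_
  ring

lemma bBm_succ {q : ℕ} (k l : Fin n → ℝ) (Φ Φ' : Alt n (q + 1)) :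
    bBH (Hm k l) (q + 1) Φ Φ'
      = (∑ a, Gd n a * bBH (Hm k l) q (Φ.curryLeft (ee a)) (Φ'.curryLeft (ee a)))
        + bBH (Hm k l) q (Φ.curryLeft k) (Φ'.curryLeft l)
        + bBH (Hm k l) q (Φ.curryLeft l) (Φ'.curryLeft k) := by
  rw [bBH_succ]
  have expand : ∀ a b : Fin n,
      Hm k l a b * bBH (Hm k l) q (Φ.curryLeft (ee a)) (Φ'.curryLeft (ee b))
      = (if a = b then Gd n a * bBH (Hm k l) q (Φ.curryLeft (ee a)) (Φ'.curryLeft (ee b)) else 0)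
        + k a * (l b * bBH (Hm k l) q (Φ.curryLeft (ee a)) (Φ'.curryLeft (ee b)))
        + l a * (k b * bBH (Hm k l) q (Φ.curryLeft (ee a)) (Φ'.curryLeft (ee b))) := by
    intro a b
    unfold Hm
    split <;> ring
  simp only [expand]
  rw [Finset.sum_congr rfl fun a _ => Finset.sum_add_distrib]
  rw [Finset.sum_add_distrib]
  rw [Finset.sum_congr rfl fun a _ => Finset.sum_add_distrib]
  rw [Finset.sum_add_distrib]
  congr 1
  · congr 1
    · refine Finset.sum_congr rfl fun a _ => ?_
      simp [Finset.sum_ite_eq]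
    · calc ∑ a, ∑ b, k a * (l b * bBH (Hm k l) q (Φ.curryLeft (ee a)) (Φ'.curryLeft (ee b)))
          = ∑ a, k a * ∑ b, l b * bBH (Hm k l) q (Φ.curryLeft (ee a)) (Φ'.curryLeft (ee b)) :=
            Finset.sum_congr rfl fun a _ => (Finset.mul_sum _ _ _).symm
        _ = ∑ a, k a * bBH (Hm k l) q (Φ.curryLeft (ee a)) (Φ'.curryLeft l) :=
            Finset.sum_congr rfl fun a _ => by rw [bBH_curry_sum_right]
        _ = bBH (Hm k l) q (Φ.curryLeft k) (Φ'.curryLeft l) := bBH_curry_sum_left _ _ _ _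
  · calc ∑ a, ∑ b, l a * (k b * bBH (Hm k l) q (Φ.curryLeft (ee a)) (Φ'.curryLeft (ee b)))
        = ∑ a, l a * ∑ b, k b * bBH (Hm k l) q (Φ.curryLeft (ee a)) (Φ'.curryLeft (ee b)) :=
          Finset.sum_congr rfl fun a _ => (Finset.mul_sum _ _ _).symm
      _ = ∑ a, l a * bBH (Hm k l) q (Φ.curryLeft (ee a)) (Φ'.curryLeft k) :=
          Finset.sum_congr rfl fun a _ => by rw [bBH_curry_sum_right]
      _ = bBH (Hm k l) q (Φ.curryLeft l) (Φ'.curryLeft k) := bBH_curry_sum_left _ _ _ _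


lemma comp_swap01 {t : ℕ} (x y : Fin n → ℝ) (v : Fin t → (Fin n → ℝ)) :
    (Fin.cons (α := fun _ => Fin n → ℝ) y (Fin.cons x v)) ∘ (Equiv.swap (0 : Fin (t + 2)) 1)
      = Fin.cons x (Fin.cons y v) := by
  funext j
  simp only [Function.comp_apply]
  refine Fin.cases ?_ (fun i => ?_) j
  · rw [Equiv.swap_apply_left]
    rfl
  · refine Fin.cases ?_ (fun i' => ?_) i
    · rw [show ((0 : Fin (t + 1)).succ) = 1 from rfl, Equiv.swap_apply_right]
      rfl
    · rw [Equiv.swap_apply_of_ne_of_ne (Fin.succ_ne_zero _) ?_]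
      · simp [Fin.cons_succ]
      · simp [Fin.ext_iff]

lemma cons_cons_swap {t : ℕ} (Φ : Alt n (t + 2)) (x y : Fin n → ℝ) (v : Fin t → (Fin n → ℝ)) :
    Φ (Fin.cons x (Fin.cons y v)) = -Φ (Fin.cons y (Fin.cons x v)) := by
  have h01 : (0 : Fin (t + 2)) ≠ 1 := by simp [Fin.ext_iff]
  have h := Φ.map_swap (v := Fin.cons y (Fin.cons x v)) h01
  rw [comp_swap01] at h
  exact h

lemma cons_cons_self {t : ℕ} (Φ : Alt n (t + 2)) (x : Fin n → ℝ) (v : Fin t → (Fin n → ℝ)) :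
    Φ (Fin.cons x (Fin.cons x v)) = 0 := by
  refine Φ.map_eq_zero_of_eq _ (i := 0) (j := 1) ?_ (by simp [Fin.ext_iff])
  rfl

lemma cons_three_self {t : ℕ} (Φ : Alt n (t + 3)) (x y : Fin n → ℝ) (v : Fin t → (Fin n → ℝ)) :
    Φ (Fin.cons x (Fin.cons y (Fin.cons x v))) = 0 := by
  rw [cons_cons_swap Φ x y]
  have h : Φ (Fin.cons y (Fin.cons x (Fin.cons x v)))
      = (Φ.curryLeft y) (Fin.cons x (Fin.cons x v)) := rfl
  rw [h, cons_cons_self]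
  ring

lemma nN_congr_mul {q : ℕ} {Φ Φ' Ψ Ψ' : Alt n q} (c : ℝ)
    (h : ∀ β : Fin q → Fin n,
      Φ (fun j => ee (β j)) * Φ' (fun j => ee (β j))
        = c * (Ψ (fun j => ee (β j)) * Ψ' (fun j => ee (β j)))) :
    nN q Φ Φ' = c * nN q Ψ Ψ' := by
  unfold nN
  rw [Finset.mul_sum]
  refine Finset.sum_congr rfl fun β _ => ?_
  linear_combination (∏ j, Gd n (β j)) * h β

lemma nN_zero_left {q : ℕ} {Φ Φ' : Alt n q} (h : ∀ β : Fin q → Fin n, Φ (fun j => ee (β j)) = 0) :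
    nN q Φ Φ' = 0 := by
  unfold nN
  exact Finset.sum_eq_zero fun β _ => by rw [h β]; ring

lemma bBH_zero_left {q : ℕ} (H : Fin n → Fin n → ℝ) {Φ Φ' : Alt n q}
    (h : ∀ β : Fin q → Fin n, Φ (fun j => ee (β j)) = 0) :
    bBH H q Φ Φ' = 0 := by
  unfold bBH
  exact Finset.sum_eq_zero fun α _ => Finset.sum_eq_zero fun β _ => by rw [h α]; ring

lemma bBH_zero_right {q : ℕ} (H : Fin n → Fin n → ℝ) {Φ Φ' : Alt n q}
    (h : ∀ β : Fin q → Fin n, Φ' (fun j => ee (β j)) = 0) :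
    bBH H q Φ Φ' = 0 := by
  unfold bBH
  exact Finset.sum_eq_zero fun α _ => Finset.sum_eq_zero fun β _ => by rw [h β]; ring

lemma bBH_zero_deg (H : Fin n → Fin n → ℝ) (Φ Φ' : Alt n 0) :
    bBH H 0 Φ Φ' = nN 0 Φ Φ' := by
  unfold bBH nN
  rw [Fintype.sum_unique, Fintype.sum_unique, Fintype.sum_unique]
  simp

/-- Vanishing lemma: if both forms kill every tuple containing `k`, the
`Hm k l` contraction reduces to the Minkowski contraction. -/
lemma bBH_eq_nN_of_vanish (k l : Fin n → ℝ) :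
    ∀ (q : ℕ) (Φ Φ' : Alt n q),
      (∀ v : Fin q → (Fin n → ℝ), (∃ i, v i = k) → Φ v = 0) →
      (∀ v : Fin q → (Fin n → ℝ), (∃ i, v i = k) → Φ' v = 0) →
      bBH (Hm k l) q Φ Φ' = nN q Φ Φ' := by
  intro q
  induction q with
  | zero => intro Φ Φ' _ _; exact bBH_zero_deg _ _ _
  | succ q ih =>
    intro Φ Φ' hΦ hΦ'
    rw [bBm_succ, nN_succ]
    have h2 : bBH (Hm k l) q (Φ.curryLeft k) (Φ'.curryLeft l) = 0 :=
      bBH_zero_left _ fun β => hΦ _ ⟨0, rfl⟩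
    have h3 : bBH (Hm k l) q (Φ.curryLeft l) (Φ'.curryLeft k) = 0 :=
      bBH_zero_right _ fun β => hΦ' _ ⟨0, rfl⟩
    rw [h2, h3, add_zero, add_zero]
    refine Finset.sum_congr rfl fun a _ => ?_
    congr 1
    refine ih _ _ (fun v hv => ?_) (fun v hv => ?_)
    · obtain ⟨i, hi⟩ := hv
      exact hΦ _ ⟨i.succ, by simpa [Fin.cons_succ] using hi⟩
    · obtain ⟨i, hi⟩ := hv
      exact hΦ' _ ⟨i.succ, by simpa [Fin.cons_succ] using hi⟩

/-- the "double-hook" term occurring in the structure identity. -/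
def ddT (k l : Fin n → ℝ) : (q : ℕ) → Alt n (q + 1) → Alt n (q + 1) → ℝ
  | 0, _, _ => 0
  | (t + 1), Φ, Φ' =>
      nN t ((Φ.curryLeft k).curryLeft l) ((Φ'.curryLeft k).curryLeft l)

lemma sum_Gd_nN_curry {t : ℕ} (x y : Fin n → ℝ) (Φ Φ' : Alt n (t + 2)) :
    ∑ a, Gd n a * nN t ((Φ.curryLeft (ee a)).curryLeft x) ((Φ'.curryLeft (ee a)).curryLeft y)
      = nN (t + 1) (Φ.curryLeft x) (Φ'.curryLeft y) := by
  rw [nN_succ]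
  refine Finset.sum_congr rfl fun a _ => ?_
  congr 1
  have key : nN t ((Φ.curryLeft (ee a)).curryLeft x) ((Φ'.curryLeft (ee a)).curryLeft y)
      = 1 * nN t ((Φ.curryLeft x).curryLeft (ee a)) ((Φ'.curryLeft y).curryLeft (ee a)) := by
    refine nN_congr_mul 1 fun β => ?_
    simp only [curry_apply]
    rw [cons_cons_swap Φ, cons_cons_swap Φ']
    ring
  rw [key, one_mul]

lemma sum_Gd_nN_curry2 {s : ℕ} (x y : Fin n → ℝ) (Φ Φ' : Alt n (s + 3)) :
    ∑ a, Gd n a * nN s (((Φ.curryLeft (ee a)).curryLeft x).curryLeft y)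
        (((Φ'.curryLeft (ee a)).curryLeft x).curryLeft y)
      = nN (s + 1) ((Φ.curryLeft x).curryLeft y) ((Φ'.curryLeft x).curryLeft y) := by
  rw [nN_succ]
  refine Finset.sum_congr rfl fun a _ => ?_
  congr 1
  have move : ∀ (Ψ : Alt n (s + 3)) (w : Fin s → (Fin n → ℝ)),
      Ψ (Fin.cons (ee a) (Fin.cons x (Fin.cons y w)))
        = Ψ (Fin.cons x (Fin.cons y (Fin.cons (ee a) w))) := by
    intro Ψ w
    calc Ψ (Fin.cons (ee a) (Fin.cons x (Fin.cons y w)))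
        = -Ψ (Fin.cons x (Fin.cons (ee a) (Fin.cons y w))) := cons_cons_swap Ψ _ _ _
      _ = -((Ψ.curryLeft x) (Fin.cons (ee a) (Fin.cons y w))) := rfl
      _ = -(-((Ψ.curryLeft x) (Fin.cons y (Fin.cons (ee a) w)))) := by
          rw [cons_cons_swap (Ψ.curryLeft x)]
      _ = Ψ (Fin.cons x (Fin.cons y (Fin.cons (ee a) w))) := by rw [neg_neg]; rfl
  have key : nN s (((Φ.curryLeft (ee a)).curryLeft x).curryLeft y)
        (((Φ'.curryLeft (ee a)).curryLeft x).curryLeft y)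
      = 1 * nN s (((Φ.curryLeft x).curryLeft y).curryLeft (ee a))
        (((Φ'.curryLeft x).curryLeft y).curryLeft (ee a)) := by
    refine nN_congr_mul 1 fun β => ?_
    simp only [curry_apply]
    rw [move Φ, move Φ']
    ring
  rw [key, one_mul]

lemma sum_Gd_linear (f g h d : Fin n → ℝ) (c1 c2 : ℝ) :
    ∑ a, Gd n a * (f a + c1 * (g a + h a) - c2 * d a)
      = (∑ a, Gd n a * f a)
        + c1 * ((∑ a, Gd n a * g a) + (∑ a, Gd n a * h a))
        - c2 * (∑ a, Gd n a * d a) := by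
  calc ∑ a, Gd n a * (f a + c1 * (g a + h a) - c2 * d a)
      = ∑ a, (Gd n a * f a + c1 * (Gd n a * g a + Gd n a * h a) - c2 * (Gd n a * d a)) :=
        Finset.sum_congr rfl fun a _ => by ring
    _ = (∑ a, Gd n a * f a) + (∑ a, c1 * (Gd n a * g a + Gd n a * h a))
          - ∑ a, c2 * (Gd n a * d a) := by
        rw [Finset.sum_sub_distrib, Finset.sum_add_distrib]
    _ = (∑ a, Gd n a * f a)
        + c1 * ((∑ a, Gd n a * g a) + (∑ a, Gd n a * h a))
        - c2 * (∑ a, Gd n a * d a) := by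
        rw [← Finset.mul_sum, ← Finset.mul_sum, Finset.sum_add_distrib]

lemma structure_id (k l : Fin n → ℝ) :
    ∀ (q : ℕ) (Φ Φ' : Alt n (q + 1)),
      bBH (Hm k l) (q + 1) Φ Φ' =
        nN (q + 1) Φ Φ'
        + ((q : ℝ) + 1) * (nN q (Φ.curryLeft k) (Φ'.curryLeft l)
            + nN q (Φ.curryLeft l) (Φ'.curryLeft k))
        - ((q : ℝ) + 1) * (q : ℝ) * ddT k l q Φ Φ' := by
  intro q
  induction q with
  | zero =>
    intro Φ Φ'
    rw [bBm_succ, nN_succ]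
    simp only [bBH_zero_deg]
    simp only [ddT, Nat.cast_zero]
    ring
  | succ t ih =>
    intro Φ Φ'
    rw [bBm_succ, nN_succ]
    simp only [ih]
    rw [sum_Gd_linear]
    have f2 := sum_Gd_nN_curry k l Φ Φ'
    have f3 := sum_Gd_nN_curry l k Φ Φ'
    have f4 : (t : ℝ) * (∑ a, Gd n a * ddT k l t (Φ.curryLeft (ee a)) (Φ'.curryLeft (ee a)))
        = (t : ℝ) * ddT k l (t + 1) Φ Φ' := by
      cases t with
      | zero => simp [ddT]
      | succ s =>
        congr 1
        exact sum_Gd_nN_curry2 k l Φ Φ'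
    have g2 : nN t ((Φ.curryLeft k).curryLeft k) ((Φ'.curryLeft l).curryLeft l) = 0 :=
      nN_zero_left fun β => cons_cons_self Φ k _
    have g3 : nN t ((Φ.curryLeft k).curryLeft l) ((Φ'.curryLeft l).curryLeft k)
        = -1 * nN t ((Φ.curryLeft k).curryLeft l) ((Φ'.curryLeft k).curryLeft l) := by
      refine nN_congr_mul (-1) fun β => ?_
      simp only [curry_apply]
      rw [cons_cons_swap Φ' l k]
      ring
    have g5 : nN t ((Φ.curryLeft l).curryLeft k) ((Φ'.curryLeft k).curryLeft l)
        = -1 * nN t ((Φ.curryLeft k).curryLeft l) ((Φ'.curryLeft k).curryLeft l) := by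
      refine nN_congr_mul (-1) fun β => ?_
      simp only [curry_apply]
      rw [cons_cons_swap Φ l k]
      ring
    have g6 : nN t ((Φ.curryLeft l).curryLeft l) ((Φ'.curryLeft k).curryLeft k) = 0 :=
      nN_zero_left fun β => cons_cons_self Φ l _
    have g4 : (t : ℝ) * ddT k l t (Φ.curryLeft k) (Φ'.curryLeft l) = 0 := by
      cases t with
      | zero => simp [ddT]
      | succ s =>
        have : ddT k l (s + 1) (Φ.curryLeft k) (Φ'.curryLeft l) = 0 :=
          nN_zero_left fun β => cons_cons_self Φ k _
        rw [this, mul_zero]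
    have g7 : (t : ℝ) * ddT k l t (Φ.curryLeft l) (Φ'.curryLeft k) = 0 := by
      cases t with
      | zero => simp [ddT]
      | succ s =>
        have : ddT k l (s + 1) (Φ.curryLeft l) (Φ'.curryLeft k) = 0 :=
          nN_zero_left fun β => cons_three_self Φ l k _
        rw [this, mul_zero]
    have hdd : ddT k l (t + 1) Φ Φ'
        = nN t ((Φ.curryLeft k).curryLeft l) ((Φ'.curryLeft k).curryLeft l) := rfl
    rw [f2, f3, g2, g3, g5, g6]
    rw [hdd] at f4
    push_cast
    linear_combination (-((t : ℝ) + 1)) * f4 - ((t : ℝ) + 1) * g4 - ((t : ℝ) + 1) * g7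
      + ((t : ℝ) ^ 2 + 3 * (t : ℝ) + 2) * hdd


lemma bBH_nonneg (H : Fin n → Fin n → ℝ)
    (hH : ∃ B : Fin n → Fin n → ℝ, ∀ a b, H a b = ∑ c, B c a * B c b)
    (q : ℕ) (Φ : Alt n q) : 0 ≤ bBH H q Φ Φ := by
  obtain ⟨B, hB⟩ := hH
  have hprod : ∀ α β : Fin q → Fin n,
      (∏ j, H (α j) (β j))
        = ∑ γ : Fin q → Fin n, (∏ j, B (γ j) (α j)) * (∏ j, B (γ j) (β j)) := by
    intro α β
    calc ∏ j, H (α j) (β j) = ∏ j, ∑ c, B c (α j) * B c (β j) :=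
          Finset.prod_congr rfl fun j _ => hB _ _
      _ = ∑ γ ∈ Fintype.piFinset (fun _ : Fin q => (Finset.univ : Finset (Fin n))),
            ∏ j, B (γ j) (α j) * B (γ j) (β j) := Finset.prod_univ_sum _ _
      _ = ∑ γ : Fin q → Fin n, ∏ j, B (γ j) (α j) * B (γ j) (β j) := by
          rw [Fintype.piFinset_univ]
      _ = ∑ γ : Fin q → Fin n, (∏ j, B (γ j) (α j)) * (∏ j, B (γ j) (β j)) :=
          Finset.sum_congr rfl fun γ _ => Finset.prod_mul_distrib
  have key : bBH H q Φ Φ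
      = ∑ γ : Fin q → Fin n,
          (∑ α : Fin q → Fin n, (∏ j, B (γ j) (α j)) * Φ (fun j => ee (α j))) ^ 2 := by
    unfold bBH
    calc ∑ α : Fin q → Fin n, ∑ β : Fin q → Fin n,
          (∏ j, H (α j) (β j)) * Φ (fun j => ee (α j)) * Φ (fun j => ee (β j))
        = ∑ α : Fin q → Fin n, ∑ β : Fin q → Fin n, ∑ γ : Fin q → Fin n,
            ((∏ j, B (γ j) (α j)) * Φ (fun j => ee (α j)))
              * ((∏ j, B (γ j) (β j)) * Φ (fun j => ee (β j))) := by
          refine Finset.sum_congr rfl fun α _ => Finset.sum_congr rfl fun β _ => ?_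
          rw [hprod α β, Finset.sum_mul, Finset.sum_mul]
          exact Finset.sum_congr rfl fun γ _ => by ring
      _ = ∑ γ : Fin q → Fin n, ∑ α : Fin q → Fin n, ∑ β : Fin q → Fin n,
            ((∏ j, B (γ j) (α j)) * Φ (fun j => ee (α j)))
              * ((∏ j, B (γ j) (β j)) * Φ (fun j => ee (β j))) := by
          rw [Finset.sum_congr rfl fun α _ => Finset.sum_comm]
          exact Finset.sum_comm
      _ = ∑ γ : Fin q → Fin n,
            (∑ α : Fin q → Fin n, (∏ j, B (γ j) (α j)) * Φ (fun j => ee (α j))) ^ 2 := by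
          refine Finset.sum_congr rfl fun γ _ => ?_
          rw [sq, Finset.sum_mul_sum]
  rw [key]
  exact Finset.sum_nonneg fun γ _ => sq_nonneg _

lemma mink_split (u v : Fin n → ℝ) :
    mink n u v = -(u 0 * v 0) + ∑ a ∈ Finset.univ.erase 0, u a * v a := by
  unfold mink
  rw [← Finset.add_sum_erase _ _ (Finset.mem_univ (0 : Fin n))]
  congr 1
  · simp
  · refine Finset.sum_congr rfl fun a ha => ?_
    rw [if_neg (Finset.ne_of_mem_erase ha)]
    ring

lemma Hm_factor (k l : Fin n → ℝ) (hk : mink n k k = 0) (hl : mink n l l = 0)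
    (hkl : mink n k l = -1) (hk0 : 0 < k 0) :
    ∃ B : Fin n → Fin n → ℝ, ∀ a b, Hm k l a b = ∑ c, B c a * B c b := by
  have hsymm : ∀ a b, Hm k l b a = Hm k l a b := by
    intro a b
    unfold Hm
    by_cases h : a = b
    · subst h; ring
    · rw [if_neg h, if_neg (Ne.symm h)]; ring
  have hquad : ∀ x : Fin n → ℝ,
      0 ≤ ∑ a, x a * ∑ b, Hm k l a b * x b := by
    intro x
    set kx := ∑ a, k a * x a with hkx
    set lx := ∑ a, l a * x a with hlx
    set y : Fin n → ℝ := fun a => x a + kx * (Gd n a * l a) + lx * (Gd n a * k a) with hy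
    have h1 : ∀ a, ∑ b, Hm k l a b * x b = Gd n a * x a + k a * lx + l a * kx := by
      intro a
      unfold Hm
      simp only [add_mul]
      rw [Finset.sum_add_distrib, Finset.sum_add_distrib]
      congr 1
      · congr 1
        · simp [ite_mul, Finset.sum_ite_eq]
        · rw [hlx, Finset.mul_sum]
          exact Finset.sum_congr rfl fun b _ => by ring
      · rw [hkx, Finset.mul_sum]
        exact Finset.sum_congr rfl fun b _ => by ring
    have h2 : ∑ a, x a * ∑ b, Hm k l a b * x b
        = (∑ a, Gd n a * x a * x a) + 2 * (kx * lx) := by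
      rw [Finset.sum_congr rfl fun a _ => by rw [h1 a]]
      have e : ∀ a : Fin n, x a * (Gd n a * x a + k a * lx + l a * kx)
          = Gd n a * x a * x a + lx * (k a * x a) + kx * (l a * x a) := fun a => by ring
      rw [Finset.sum_congr rfl fun a _ => e a]
      rw [Finset.sum_add_distrib, Finset.sum_add_distrib, ← Finset.mul_sum, ← Finset.mul_sum]
      rw [← hkx, ← hlx]
      ring
    have h3 : ∑ a, Gd n a * y a * y a
        = (∑ a, Gd n a * x a * x a) + 2 * (kx * lx) := by
      have e : ∀ a : Fin n, Gd n a * y a * y a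
          = Gd n a * x a * x a + (2 * kx) * (l a * x a) + (2 * lx) * (k a * x a)
            + (kx * kx) * (Gd n a * l a * l a) + (lx * lx) * (Gd n a * k a * k a)
            + (2 * (kx * lx)) * (Gd n a * k a * l a) := by
        intro a
        rw [hy]
        simp only [Gd]
        split <;> ring
      rw [Finset.sum_congr rfl fun a _ => e a]
      simp only [Finset.sum_add_distrib, ← Finset.mul_sum]
      have mkk : ∑ a, Gd n a * k a * k a = mink n k k := rfl
      have mll : ∑ a, Gd n a * l a * l a = mink n l l := rfl
      have mkl : ∑ a, Gd n a * k a * l a = mink n k l := rfl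
      rw [mkk, mll, mkl, hk, hl, hkl, ← hkx, ← hlx]
      ring
    have h4 : ∑ a, y a * k a = 0 := by
      have e : ∀ a : Fin n, y a * k a
          = k a * x a + kx * (Gd n a * k a * l a) + lx * (Gd n a * k a * k a) := by
        intro a; rw [hy]; ring
      rw [Finset.sum_congr rfl fun a _ => e a]
      simp only [Finset.sum_add_distrib, ← Finset.mul_sum]
      have mkk : ∑ a, Gd n a * k a * k a = mink n k k := rfl
      have mkl : ∑ a, Gd n a * k a * l a = mink n k l := rfl
      rw [mkk, mkl, hk, hkl, ← hkx]
      ring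
    -- positivity of the Minkowski square of y, orthogonal to the null k
    have hyy : 0 ≤ ∑ a, Gd n a * y a * y a := by
      have hyk : y 0 * k 0 + ∑ a ∈ Finset.univ.erase 0, y a * k a = 0 := by
        rw [Finset.add_sum_erase Finset.univ (fun a => y a * k a) (Finset.mem_univ (0 : Fin n))]
        exact h4
      have hkk : -(k 0 * k 0) + ∑ a ∈ Finset.univ.erase 0, k a * k a = 0 := by
        rw [← mink_split]; exact hk
      have hCS := Finset.sum_mul_sq_le_sq_mul_sq (Finset.univ.erase (0 : Fin n)) y k
      have hyy2 : ∑ a, Gd n a * y a * y a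
          = -(y 0 * y 0) + ∑ a ∈ Finset.univ.erase 0, y a * y a := by
        have : ∑ a, Gd n a * y a * y a = mink n y y := rfl
        rw [this, mink_split]
      rw [hyy2]
      have hsq : ∀ (w : Fin n → ℝ), ∑ a ∈ Finset.univ.erase 0, w a ^ 2
          = ∑ a ∈ Finset.univ.erase 0, w a * w a :=
        fun w => Finset.sum_congr rfl fun a _ => sq (w a) ▸ by ring
      rw [hsq, hsq] at hCS
      have hS : ∑ a ∈ Finset.univ.erase 0, y a * k a = -(y 0 * k 0) := by linarith [hyk]
      have hSkk : ∑ a ∈ Finset.univ.erase 0, k a * k a = k 0 * k 0 := by linarith [hkk]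
      rw [hS, hSkk] at hCS
      nlinarith [hCS, mul_pos hk0 hk0]
    calc (0:ℝ) ≤ ∑ a, Gd n a * y a * y a := hyy
      _ = (∑ a, Gd n a * x a * x a) + 2 * (kx * lx) := h3
      _ = ∑ a, x a * ∑ b, Hm k l a b * x b := h2.symm
  -- package as a positive semidefinite matrix and factor it
  have hpsd : (Matrix.of (Hm k l)).PosSemidef := by
    refine Matrix.PosSemidef.of_dotProduct_mulVec_nonneg ?_ ?_
    · ext a b
      simp only [Matrix.conjTranspose_apply, Matrix.of_apply, star_trivial]
      first
        | exact hsymm b a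
        | exact hsymm a b
    · intro x
      have heq : dotProduct (star x) ((Matrix.of (Hm k l)).mulVec x)
          = ∑ a, x a * ∑ b, Hm k l a b * x b := by
        simp [dotProduct, Matrix.mulVec]
      rw [heq]
      exact hquad x
  obtain ⟨B, hBeq⟩ : ∃ B : Matrix (Fin n) (Fin n) ℝ, Matrix.of (Hm k l) = B.conjTranspose * B := by
    open scoped MatrixOrder in
    refine ⟨CFC.sqrt (Matrix.of (Hm k l)), ?_⟩
    rw [← Matrix.star_eq_conjTranspose, (CFC.sqrt_nonneg _).isSelfAdjoint.star_eq,
      CFC.sqrt_mul_sqrt_self _ hpsd.nonneg]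
  refine ⟨fun c a => B c a, fun a b => ?_⟩
  have h' : Matrix.of (Hm k l) a b = (B.conjTranspose * B) a b := by
    rw [← hBeq]
  rw [Matrix.mul_apply] at h'
  simpa [Matrix.conjTranspose_apply] using h'


/-! ### Connection with the super-energy definitions -/

lemma nN_top (p : ℕ) (Ω : Alt n (p + 1)) : nN (p + 1) Ω Ω = seNorm n p Ω := rfl

lemma nN_hook (p : ℕ) (Ω : Alt n (p + 1)) (x y : Fin n → ℝ) :
    nN p (Ω.curryLeft x) (Ω.curryLeft y) = seContr n p Ω x y := rfl

lemma seContr_symm (p : ℕ) (Ω : Alt n (p + 1)) (x y : Fin n → ℝ) :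
    seContr n p Ω x y = seContr n p Ω y x := by
  unfold seContr
  exact Finset.sum_congr rfl fun β _ => by ring

lemma cons_add' {q : ℕ} (Φ : Alt n (q + 1)) (x y : Fin n → ℝ) (f : Fin q → (Fin n → ℝ)) :
    Φ (Fin.cons (x + y) f) = Φ (Fin.cons x f) + Φ (Fin.cons y f) := by
  have h : Φ (Fin.cons (x + y) f) = (Φ.curryLeft (x + y)) f := rfl
  rw [h, map_add]
  rfl

lemma cons_smul' {q : ℕ} (Φ : Alt n (q + 1)) (t : ℝ) (y : Fin n → ℝ)
    (f : Fin q → (Fin n → ℝ)) :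
    Φ (Fin.cons (t • y) f) = t * Φ (Fin.cons y f) := by
  have h : Φ (Fin.cons (t • y) f) = (Φ.curryLeft (t • y)) f := rfl
  rw [h, map_smul]
  rfl

lemma seContr_add_left (p : ℕ) (Ω : Alt n (p + 1)) (x x' y : Fin n → ℝ) :
    seContr n p Ω (x + x') y = seContr n p Ω x y + seContr n p Ω x' y := by
  unfold seContr
  rw [← Finset.sum_add_distrib]
  refine Finset.sum_congr rfl fun β _ => ?_
  rw [cons_add']
  ring

lemma seContr_smul_left (p : ℕ) (Ω : Alt n (p + 1)) (t : ℝ) (x y : Fin n → ℝ) :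
    seContr n p Ω (t • x) y = t * seContr n p Ω x y := by
  unfold seContr
  rw [Finset.mul_sum]
  refine Finset.sum_congr rfl fun β _ => ?_
  rw [cons_smul']
  ring

lemma mink_symm (u v : Fin n → ℝ) : mink n u v = mink n v u := by
  unfold mink
  exact Finset.sum_congr rfl fun a _ => by ring

lemma mink_add_left (x x' y : Fin n → ℝ) :
    mink n (x + x') y = mink n x y + mink n x' y := by
  unfold mink
  rw [← Finset.sum_add_distrib]
  refine Finset.sum_congr rfl fun a _ => ?_
  simp only [Pi.add_apply]
  ring

lemma mink_smul_left (t : ℝ) (x y : Fin n → ℝ) :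
    mink n (t • x) y = t * mink n x y := by
  unfold mink
  rw [Finset.mul_sum]
  refine Finset.sum_congr rfl fun a _ => ?_
  simp only [Pi.smul_apply, smul_eq_mul]
  ring

lemma seT_lin_left (p : ℕ) (Ω : Alt n (p + 1)) (a b : ℝ) (w z y : Fin n → ℝ) :
    seT n p Ω (a • w + b • z) y = a * seT n p Ω w y + b * seT n p Ω z y := by
  unfold seT
  rw [seContr_add_left, seContr_smul_left, seContr_smul_left,
    mink_add_left, mink_smul_left, mink_smul_left]
  ring

lemma seT_symm (p : ℕ) (Ω : Alt n (p + 1)) (x y : Fin n → ℝ) :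
    seT n p Ω x y = seT n p Ω y x := by
  unfold seT
  rw [seContr_symm, mink_symm]

lemma seT_smul_right (p : ℕ) (Ω : Alt n (p + 1)) (t : ℝ) (x y : Fin n → ℝ) :
    seT n p Ω x (t • y) = t * seT n p Ω x y := by
  unfold seT
  rw [seContr_symm p Ω x (t • y), seContr_smul_left, seContr_symm p Ω y x,
    mink_symm (u := x) (v := t • y), mink_smul_left, mink_symm (u := y) (v := x)]
  ring

/-! ### Positivity for null pairs -/

lemma seT_null_pair (p : ℕ) (Ω : Alt n (p + 1)) (w z : Fin n → ℝ)
    (hww : mink n w w = 0) (hzz : mink n z z = 0) (hwz : mink n w z = -1)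
    (hw0 : 0 < w 0) : 0 ≤ seT n p Ω w z := by
  have hfac := Hm_factor w z hww hzz hwz hw0
  have h1 : 0 ≤ bBH (Hm w z) (p + 1) Ω Ω := bBH_nonneg _ hfac _ Ω
  have hId := structure_id w z p Ω Ω
  rw [nN_top, nN_hook, nN_hook, seContr_symm p Ω z w] at hId
  have h2 : 0 ≤ ((p : ℝ) + 1) * (p : ℝ) * ddT w z p Ω Ω := by
    cases p with
    | zero => simp [ddT]
    | succ s =>
      have hv : ∀ v : Fin s → (Fin n → ℝ), (∃ i, v i = w)
          → ((Ω.curryLeft w).curryLeft z) v = 0 := by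
        rintro v ⟨i, hi⟩
        show Ω (Fin.cons w (Fin.cons z v)) = 0
        refine Ω.map_eq_zero_of_eq _ (i := 0) (j := i.succ.succ) ?_ ?_
        · simp [Fin.cons_succ, hi]
        · exact (Fin.succ_ne_zero _).symm
      have hdd : ddT w z (s + 1) Ω Ω
          = bBH (Hm w z) s ((Ω.curryLeft w).curryLeft z)
              ((Ω.curryLeft w).curryLeft z) :=
        (bBH_eq_nN_of_vanish w z s _ _ hv hv).symm
      rw [hdd]
      have hb := bBH_nonneg _ hfac _ ((Ω.curryLeft w).curryLeft z)
      have hcoef : (0 : ℝ) ≤ ((s : ℝ) + 1 + 1) * ((s : ℝ) + 1) := by positivity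
      push_cast
      exact mul_nonneg hcoef hb
  unfold seT
  rw [hwz]
  apply mul_nonneg
  · have := Nat.factorial_pos p
    positivity
  · have key : 0 ≤ 2 * ((p : ℝ) + 1) * seContr n p Ω w z + seNorm n p Ω := by
      nlinarith [h1, h2, hId]
    have heq : seContr n p Ω w z - 1 / (2 * ((p : ℝ) + 1)) * seNorm n p Ω * (-1)
        = (2 * ((p : ℝ) + 1) * seContr n p Ω w z + seNorm n p Ω)
            * (1 / (2 * ((p : ℝ) + 1))) := by
      have hne : (2 * ((p : ℝ) + 1)) ≠ 0 := by positivity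
      field_simp
      ring
    rw [heq]
    exact mul_nonneg key (by positivity)

lemma seT_null_diag (p : ℕ) (Ω : Alt n (p + 1)) (w : Fin n → ℝ)
    (hw0 : w 0 = 1) (hww : mink n w w = 0) : 0 ≤ seT n p Ω w w := by
  have hSw : ∑ a ∈ Finset.univ.erase 0, w a * w a = 1 := by
    have h := mink_split w w
    rw [hww, hw0] at h
    linarith
  set m : Fin n → ℝ := fun j => if j = 0 then 1/2 else -(w j)/2 with hm
  have hm0 : m 0 = 1/2 := by simp [hm]
  have hwm : mink n w m = -1 := by
    rw [mink_split]
    have e2 : ∑ a ∈ Finset.univ.erase 0, w a * m a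
        = -(1/2) * ∑ a ∈ Finset.univ.erase 0, w a * w a := by
      rw [Finset.mul_sum]
      refine Finset.sum_congr rfl fun a ha => ?_
      simp only [hm]
      rw [if_neg (Finset.ne_of_mem_erase ha)]
      ring
    rw [e2, hSw, hw0, hm0]
    norm_num
  have hmm : mink n m m = 0 := by
    rw [mink_split]
    have e2 : ∑ a ∈ Finset.univ.erase 0, m a * m a
        = (1/4) * ∑ a ∈ Finset.univ.erase 0, w a * w a := by
      rw [Finset.mul_sum]
      refine Finset.sum_congr rfl fun a ha => ?_
      simp only [hm]
      rw [if_neg (Finset.ne_of_mem_erase ha)]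
      ring
    rw [e2, hSw, hm0]
    norm_num
  have hfac := Hm_factor w m hww hmm hwm (by rw [hw0]; norm_num)
  have hv : ∀ v : Fin p → (Fin n → ℝ), (∃ i, v i = w) → (Ω.curryLeft w) v = 0 := by
    rintro v ⟨i, hi⟩
    show Ω (Fin.cons w v) = 0
    refine Ω.map_eq_zero_of_eq _ (i := 0) (j := i.succ) ?_ ?_
    · simp [Fin.cons_succ, hi]
    · exact (Fin.succ_ne_zero _).symm
  have hpos : 0 ≤ seContr n p Ω w w := by
    rw [← nN_hook, ← bBH_eq_nN_of_vanish w m p _ _ hv hv]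
    exact bBH_nonneg _ hfac _ _
  unfold seT
  rw [hww, mul_zero, sub_zero]
  apply mul_nonneg
  · have := Nat.factorial_pos p
    positivity
  · exact hpos

lemma key_pair (p : ℕ) (Ω : Alt n (p + 1)) (w z : Fin n → ℝ)
    (hw0 : w 0 = 1) (hww : mink n w w = 0) (hz0 : z 0 = 1) (hzz : mink n z z = 0) :
    0 ≤ seT n p Ω w z := by
  have hSw : ∑ a ∈ Finset.univ.erase 0, w a * w a = 1 := by
    have h := mink_split w w
    rw [hww, hw0] at h
    linarith
  have hSz : ∑ a ∈ Finset.univ.erase 0, z a * z a = 1 := by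
    have h := mink_split z z
    rw [hzz, hz0] at h
    linarith
  have hCS := Finset.sum_mul_sq_le_sq_mul_sq (Finset.univ.erase (0 : Fin n)) w z
  have hsq : ∀ (f : Fin n → ℝ), ∑ a ∈ Finset.univ.erase 0, f a ^ 2
      = ∑ a ∈ Finset.univ.erase 0, f a * f a :=
    fun f => Finset.sum_congr rfl fun a _ => by ring
  rw [hsq, hsq, hSw, hSz] at hCS
  have hwz_le : ∑ a ∈ Finset.univ.erase 0, w a * z a ≤ 1 := by nlinarith [hCS]
  have hc := mink_split w z
  rw [hw0, hz0] at hc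
  have hcle : mink n w z ≤ 0 := by rw [hc]; linarith
  rcases eq_or_lt_of_le hcle with heq | hlt
  · -- the two null vectors coincide
    have hwz1 : ∑ a ∈ Finset.univ.erase 0, w a * z a = 1 := by
      rw [heq] at hc
      linarith
    have hdiff : ∑ a ∈ Finset.univ.erase 0, (w a - z a) * (w a - z a) = 0 := by
      have e : ∀ a : Fin n, (w a - z a) * (w a - z a)
          = w a * w a + z a * z a - 2 * (w a * z a) := fun a => by ring
      rw [Finset.sum_congr rfl fun a _ => e a]
      rw [Finset.sum_sub_distrib, Finset.sum_add_distrib, ← Finset.mul_sum]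
      rw [hSw, hSz, hwz1]
      ring
    have hzw : z = w := by
      funext j
      by_cases hj : j = 0
      · rw [hj, hw0, hz0]
      · have hmem : j ∈ Finset.univ.erase (0 : Fin n) :=
          Finset.mem_erase.mpr ⟨hj, Finset.mem_univ j⟩
        have := (Finset.sum_eq_zero_iff_of_nonneg
          (fun a _ => mul_self_nonneg (w a - z a))).mp hdiff j hmem
        have := mul_self_eq_zero.mp this
        linarith [this]
    rw [hzw]
    exact seT_null_diag p Ω w hw0 hww
  · -- strictly negative product: rescale to a normalized null pair
    set c := mink n w z with hcdef
    have hcne : c ≠ 0 := ne_of_lt hlt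
    have hγpos : 0 < -c := by linarith
    have hkey : 0 ≤ seT n p Ω w ((-c)⁻¹ • z) := by
      apply seT_null_pair
      · exact hww
      · rw [mink_symm, mink_smul_left, mink_symm, mink_smul_left, mink_symm, hzz]
        ring
      · rw [mink_symm, mink_smul_left, mink_symm, ← hcdef]
        field_simp
      · rw [hw0]; norm_num
    have hzeq : z = (-c) • ((-c)⁻¹ • z) := by
      rw [smul_smul]
      rw [mul_inv_cancel₀ (by simpa using hcne)]
      simp
    calc (0:ℝ) ≤ (-c) * seT n p Ω w ((-c)⁻¹ • z) := mul_nonneg (le_of_lt hγpos) hkey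
      _ = seT n p Ω w z := by
          rw [← seT_smul_right, ← hzeq]


/-! ### Decomposition of future causal vectors into null vectors -/

lemma null_decomp (hn : 1 < n) (u : Fin n → ℝ) (hu : FutureCausal n u) :
    ∃ (a b : ℝ) (w z : Fin n → ℝ), 0 ≤ a ∧ 0 ≤ b ∧
      w 0 = 1 ∧ mink n w w = 0 ∧ z 0 = 1 ∧ mink n z z = 0 ∧ u = a • w + b • z := by
  have hSnn : 0 ≤ ∑ a ∈ Finset.univ.erase (0 : Fin n), u a * u a :=
    Finset.sum_nonneg fun a _ => mul_self_nonneg _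
  set r := Real.sqrt (∑ a ∈ Finset.univ.erase (0 : Fin n), u a * u a) with hr
  have hr2 : r * r = ∑ a ∈ Finset.univ.erase (0 : Fin n), u a * u a :=
    Real.mul_self_sqrt hSnn
  have hrnn : 0 ≤ r := Real.sqrt_nonneg _
  have hu0 : 0 ≤ u 0 := hu.2
  have hru : r ≤ u 0 := by
    have h := hu.1
    rw [mink_split] at h
    nlinarith [hr2, hrnn, hu0]
  by_cases hrz : r = 0
  · -- purely timelike along the axis
    have hz : ∀ a ∈ Finset.univ.erase (0 : Fin n), u a = 0 := by
      intro a ha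
      have h0 : ∑ b ∈ Finset.univ.erase (0 : Fin n), u b * u b = 0 := by
        rw [← hr2, hrz]; ring
      exact mul_self_eq_zero.mp
        ((Finset.sum_eq_zero_iff_of_nonneg (fun b _ => mul_self_nonneg (u b))).mp h0 a ha)
    set i1 : Fin n := ⟨1, hn⟩ with hi1
    have hi10 : i1 ≠ 0 := by simp [hi1, Fin.ext_iff]
    have htwo : ∀ c : ℝ, mink n
        (fun j => if j = 0 then 1 else if j = i1 then c else 0)
        (fun j => if j = 0 then 1 else if j = i1 then c else 0) = -1 + c * c := by
      intro c
      rw [mink_split]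
      have hmem : i1 ∈ Finset.univ.erase (0 : Fin n) :=
        Finset.mem_erase.mpr ⟨hi10, Finset.mem_univ _⟩
      rw [← Finset.add_sum_erase _ _ hmem]
      have hrest : ∑ a ∈ (Finset.univ.erase (0 : Fin n)).erase i1,
          (if a = 0 then (1:ℝ) else if a = i1 then c else 0)
            * (if a = 0 then 1 else if a = i1 then c else 0) = 0 := by
        refine Finset.sum_eq_zero fun a ha => ?_
        have ha1 : a ≠ i1 := (Finset.mem_erase.mp ha).1
        have ha0 : a ≠ 0 := (Finset.mem_erase.mp ((Finset.mem_erase.mp ha).2)).1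
        rw [if_neg ha0, if_neg ha1]
        ring
      rw [hrest, if_neg hi10, if_pos rfl]
      norm_num
    refine ⟨u 0 / 2, u 0 / 2,
      (fun j => if j = 0 then 1 else if j = i1 then 1 else 0),
      (fun j => if j = 0 then 1 else if j = i1 then -1 else 0),
      by linarith, by linarith, by simp, ?_, by simp, ?_, ?_⟩
    · rw [htwo]; ring
    · rw [htwo]; ring
    · funext j
      by_cases hj : j = 0
      · subst hj
        simp only [Pi.add_apply, Pi.smul_apply, if_pos rfl, smul_eq_mul]
        norm_num
      · by_cases hj1 : j = i1
        · subst hj1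
          have : u i1 = 0 := hz i1 (Finset.mem_erase.mpr ⟨hi10, Finset.mem_univ _⟩)
          simp only [Pi.add_apply, Pi.smul_apply, if_neg hi10, if_pos rfl, smul_eq_mul, this]
          norm_num
        · have : u j = 0 := hz j (Finset.mem_erase.mpr ⟨hj, Finset.mem_univ _⟩)
          simp only [Pi.add_apply, Pi.smul_apply, if_neg hj, if_neg hj1, smul_eq_mul, this]
          norm_num
  · -- nonzero spatial part
    have hrpos : 0 < r := lt_of_le_of_ne hrnn (Ne.symm hrz)
    have hnull : ∀ c : ℝ, c * c = 1 → mink n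
        (fun j => if j = 0 then 1 else c * u j / r)
        (fun j => if j = 0 then 1 else c * u j / r) = 0 := by
      intro c hc
      rw [mink_split]
      have e : ∑ a ∈ Finset.univ.erase (0 : Fin n),
          (if a = 0 then (1:ℝ) else c * u a / r) * (if a = 0 then 1 else c * u a / r)
          = (∑ a ∈ Finset.univ.erase (0 : Fin n), u a * u a) / (r * r) := by
        rw [Finset.sum_div]
        refine Finset.sum_congr rfl fun a ha => ?_
        rw [if_neg (Finset.ne_of_mem_erase ha)]
        field_simp
        nlinarith [hc]
      rw [e, ← hr2]
      field_simp
      simp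
    refine ⟨(u 0 + r)/2, (u 0 - r)/2,
      (fun j => if j = 0 then 1 else 1 * u j / r),
      (fun j => if j = 0 then 1 else (-1) * u j / r),
      by linarith, by linarith, by simp, hnull 1 (by norm_num), by simp,
      hnull (-1) (by norm_num), ?_⟩
    funext j
    by_cases hj : j = 0
    · subst hj
      simp only [Pi.add_apply, Pi.smul_apply, if_pos rfl, smul_eq_mul]
      norm_num
      ring
    · simp only [Pi.add_apply, Pi.smul_apply, if_neg hj, smul_eq_mul]
      field_simp
      ring

end SEaux

/-- The superenergy tensor of a nonzero `(p+1)`-form, `1 ≤ p+1 ≤ n-1`, has the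
dominant property. -/
theorem stmt_6 (n p : ℕ) [NeZero n] (hp : p + 1 ≤ n - 1)
    (Ω : (Fin n → ℝ) [⋀^Fin (p + 1)]→ₗ[ℝ] ℝ) (hΩ : Ω ≠ 0) :
    ∀ u v : Fin n → ℝ, FutureCausal n u → FutureCausal n v →
      0 ≤ seT n p Ω u v := by
  intro u v hu hv
  have hn1 : 0 < n := Nat.pos_of_ne_zero (NeZero.ne n)
  have hn : 1 < n := by omega
  obtain ⟨a₁, a₂, w₁, w₂, ha₁, ha₂, hw₁0, hw₁, hw₂0, hw₂, hueq⟩ :=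
    SEaux.null_decomp hn u hu
  obtain ⟨b₁, b₂, z₁, z₂, hb₁, hb₂, hz₁0, hz₁, hz₂0, hz₂, hveq⟩ :=
    SEaux.null_decomp hn v hv
  have hpair : ∀ (w z : Fin n → ℝ), w 0 = 1 → mink n w w = 0 → z 0 = 1 →
      mink n z z = 0 → 0 ≤ seT n p Ω w z := fun w z h1 h2 h3 h4 =>
    SEaux.key_pair p Ω w z h1 h2 h3 h4
  have expand_right : ∀ w : Fin n → ℝ,
      seT n p Ω w v = b₁ * seT n p Ω w z₁ + b₂ * seT n p Ω w z₂ := by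
    intro w
    rw [SEaux.seT_symm, hveq, SEaux.seT_lin_left,
      SEaux.seT_symm p Ω z₁ w, SEaux.seT_symm p Ω z₂ w]
  rw [hueq, SEaux.seT_lin_left, expand_right, expand_right]
  have t11 := hpair w₁ z₁ hw₁0 hw₁ hz₁0 hz₁
  have t12 := hpair w₁ z₂ hw₁0 hw₁ hz₂0 hz₂
  have t21 := hpair w₂ z₁ hw₂0 hw₂ hz₁0 hz₁
  have t22 := hpair w₂ z₂ hw₂0 hw₂ hz₂0 hz₂
  have := add_nonneg
    (mul_nonneg ha₁ (add_nonneg (mul_nonneg hb₁ t11) (mul_nonneg hb₂ t12)))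
    (mul_nonneg ha₂ (add_nonneg (mul_nonneg hb₁ t21) (mul_nonneg hb₂ t22)))
  linarith [this]
end
end

section
/- Let T be a symmetric bilinear form on an n-dimensional Lorentzian vector space whose metric square satisfies T² = g (i.e., the associated endomorphism squares to the identity) and which has the dominant property up to sign. Then the trace of T (with respect to g) satisfies tr T = ±(2p - n) for some integer p with 1 ≤ p ≤ n, corresponding to T being ± the superenergy tensor of a simple p-form. -/
/-!
The endomorphism `t = g⁻¹ ∘ T` is an involution, so `(1 + t) / 2` is a projection onto a
subspace of some dimension `k ≤ n`; its trace is `k`, whence `tr T = 2k - n`. The value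
`k = 0` is recovered as `-(2n - n)`.
-/

open scoped BigOperators

noncomputable section

/-- Metric square of a bilinear form:
`T²(x,y) = Σ_α η(α) T(x,e_α) T(e_α,y)` (index raising, mostly-plus signs). -/
def bilinSq (n : ℕ) [NeZero n] (T : (Fin n → ℝ) →ₗ[ℝ] (Fin n → ℝ) →ₗ[ℝ] ℝ)
    (x y : Fin n → ℝ) : ℝ :=
  ∑ α : Fin n, (if α = 0 then (-1 : ℝ) else 1) * T x (Pi.single α 1) * T (Pi.single α 1) y

/-- Trace of a bilinear form with respect to the Minkowski metric. -/
def bilinTr (n : ℕ) [NeZero n] (T : (Fin n → ℝ) →ₗ[ℝ] (Fin n → ℝ) →ₗ[ℝ] ℝ) : ℝ :=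
  ∑ α : Fin n, (if α = 0 then (-1 : ℝ) else 1) * T (Pi.single α 1) (Pi.single α 1)

theorem Module.End.exists_trace_eq_of_mul_self_eq_one {K V : Type*} [Field K] [Invertible (2 : K)]
    [AddCommGroup V] [Module K V] [FiniteDimensional K V] {f : Module.End K V}
    (hf : f * f = 1) :
    ∃ k ≤ Module.finrank K V, LinearMap.trace K V f = 2 * k - Module.finrank K V := by
  set P : Module.End K V := (⅟2 : K) • (1 + f)
  have hP : IsIdempotentElem P := by
    have hsq : (1 + f) * (1 + f) = (2 : K) • (1 + f) := by
      simp only [add_mul, mul_add, one_mul, mul_one, hf, two_smul]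
      abel
    show P * P = P
    rw [smul_mul_smul_comm, hsq, smul_smul, mul_assoc, invOf_mul_self, mul_one]
  have htrP : LinearMap.trace K V P = ⅟2 * (Module.finrank K V + LinearMap.trace K V f) := by
    simp [P, LinearMap.trace_one, mul_add]
  refine ⟨Module.finrank K (LinearMap.range P), Submodule.finrank_le _, ?_⟩
  rw [← (LinearMap.IsIdempotentElem.isProj_range P hP).trace, htrP, ← mul_assoc,
    mul_invOf_self, one_mul]
  ring

theorem Matrix.exists_trace_eq_of_mul_self_eq_one {K ι : Type*} [Field K] [Invertible (2 : K)]
    [Fintype ι] [DecidableEq ι] {A : Matrix ι ι K} (hA : A * A = 1) :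
    ∃ k ≤ Fintype.card ι, A.trace = 2 * k - Fintype.card ι := by
  have hf : Matrix.toLin' A * Matrix.toLin' A = 1 := by
    rw [Module.End.mul_eq_comp, ← Matrix.toLin'_mul, hA, Matrix.toLin'_one, Module.End.one_eq_id]
  simpa using Module.End.exists_trace_eq_of_mul_self_eq_one hf

/-- The matrix of `t = g⁻¹ ∘ T` in the standard basis. -/
def bilinMatrix (n : ℕ) [NeZero n] (T : (Fin n → ℝ) →ₗ[ℝ] (Fin n → ℝ) →ₗ[ℝ] ℝ) :
    Matrix (Fin n) (Fin n) ℝ :=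
  Matrix.of fun α β => (if α = 0 then (-1 : ℝ) else 1) * T (Pi.single α 1) (Pi.single β 1)

theorem mink_single_single (n : ℕ) [NeZero n] (β γ : Fin n) :
    mink n (Pi.single β 1) (Pi.single γ 1) = if β = γ then (if β = 0 then -1 else 1) else 0 := by
  rw [mink, Finset.sum_eq_single β]
  · by_cases h : β = γ <;> simp [h]
  · intro i _ hi
    simp [Pi.single_apply, hi]
  · simp

theorem bilinMatrix_mul_self {n : ℕ} [NeZero n] {T : (Fin n → ℝ) →ₗ[ℝ] (Fin n → ℝ) →ₗ[ℝ] ℝ}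
    (hsq : ∀ x y : Fin n → ℝ, bilinSq n T x y = mink n x y) :
    bilinMatrix n T * bilinMatrix n T = 1 := by
  ext β γ
  have h := hsq (Pi.single β 1) (Pi.single γ 1)
  rw [bilinSq, mink_single_single] at h
  calc (bilinMatrix n T * bilinMatrix n T) β γ
      = (if β = 0 then (-1 : ℝ) else 1) * ∑ α : Fin n, (if α = 0 then (-1 : ℝ) else 1) *
          T (Pi.single β 1) (Pi.single α 1) * T (Pi.single α 1) (Pi.single γ 1) := by
        simp only [Matrix.mul_apply, bilinMatrix, Matrix.of_apply, Finset.mul_sum]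
        exact Finset.sum_congr rfl fun α _ => by ring
    _ = (1 : Matrix (Fin n) (Fin n) ℝ) β γ := by
        rw [h, Matrix.one_apply]
        split_ifs <;> norm_num

theorem trace_bilinMatrix (n : ℕ) [NeZero n] (T : (Fin n → ℝ) →ₗ[ℝ] (Fin n → ℝ) →ₗ[ℝ] ℝ) :
    (bilinMatrix n T).trace = bilinTr n T :=
  rfl

theorem stmt_11_general (n : ℕ) [NeZero n]
    (T : (Fin n → ℝ) →ₗ[ℝ] (Fin n → ℝ) →ₗ[ℝ] ℝ)
    (hsq : ∀ x y : Fin n → ℝ, bilinSq n T x y = mink n x y) :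
    ∃ p : ℕ, 1 ≤ p ∧ p ≤ n ∧
      (bilinTr n T = 2 * (p : ℝ) - n ∨ bilinTr n T = -(2 * (p : ℝ) - n)) := by
  obtain ⟨k, hkn, htr⟩ := Matrix.exists_trace_eq_of_mul_self_eq_one (bilinMatrix_mul_self hsq)
  rw [trace_bilinMatrix] at htr
  simp only [Fintype.card_fin] at hkn htr
  rcases k.eq_zero_or_pos with rfl | hk
  · refine ⟨n, Nat.one_le_iff_ne_zero.mpr (NeZero.ne n), le_rfl, Or.inr ?_⟩
    rw [htr]
    push_cast
    ring
  · exact ⟨k, hk, hkn, Or.inl htr⟩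

/-- If a symmetric bilinear form satisfies `T² = g` and has the dominant
property up to sign, then `tr T = ±(2p - n)` for some integer `1 ≤ p ≤ n`,
corresponding to `T` being `±` the superenergy tensor of a simple `p`-form. -/
theorem stmt_11 (n : ℕ) [NeZero n]
    (T : (Fin n → ℝ) →ₗ[ℝ] (Fin n → ℝ) →ₗ[ℝ] ℝ)
    (hsym : ∀ x y, T x y = T y x)
    (hsq : ∀ x y : Fin n → ℝ, bilinSq n T x y = mink n x y)
    (hDP : (∀ u v, FutureCausal n u → FutureCausal n v → 0 ≤ T u v) ∨
           (∀ u v, FutureCausal n u → FutureCausal n v → T u v ≤ 0)) :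
    ∃ p : ℕ, 1 ≤ p ∧ p ≤ n ∧
      (bilinTr n T = 2 * (p : ℝ) - n ∨ bilinTr n T = -(2 * (p : ℝ) - n)) :=
  stmt_11_general n T hsq

end
end
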